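/- arXiv:1801.05187 — 4 statements merged into one kernel-verified Lean document; each statement's English description precedes it below -/
import Mathlib

section
/- Every amenable topological group is unitarisable: every uniformly bounded continuous representation of an amenable topological group on a Hilbert space is conjugate (by a bounded invertible operator) to a unitary representation. -/
open scoped BoundedContinuousFunction

/-- A topological group is amenable if there is a left-invariant mean on the space of
bounded continuous real-valued functions on it. -/
def IsAmenableGroup (G : Type*) [Group G] [TopologicalSpace G] [IsTopologicalGroup G] : Prop :=
  ∃ m : (G →ᵇ ℝ) →ₗ[ℝ] ℝ,
    m (BoundedContinuousFunction.const G (1 : ℝ)) = 1 ∧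
    (∀ f : G →ᵇ ℝ, 0 ≤ f → 0 ≤ m f) ∧
    ∀ (g : G) (f : G →ᵇ ℝ),
      m (f.compContinuous ((Homeomorph.mulLeft g : G ≃ₜ G) : C(G, G))) = m f

/-- A topological group `G` is unitarisable if every uniformly bounded strongly continuous
representation of `G` on a complex Hilbert space is conjugate, by a bounded invertible
operator, to a unitary representation. -/
def Unitarisable (G : Type*) [Group G] [TopologicalSpace G] : Prop :=
  ∀ (H : Type) (_ : NormedAddCommGroup H) (_ : InnerProductSpace ℂ H) (_ : CompleteSpace H)
    (π : G →* (H ≃L[ℂ] H)),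
    (∃ C : ℝ, ∀ g : G, ‖((π g : H →L[ℂ] H))‖ ≤ C) →
    (∀ v : H, Continuous fun g : G => π g v) →
    ∃ S : H ≃L[ℂ] H, ∀ (g : G) (v w : H),
      (inner ℂ (S (π g (S.symm v))) (S (π g (S.symm w))) : ℂ) = inner ℂ v w

/-!
Averaging the inner products `⟪π g⁻¹ v, π g⁻¹ w⟫` against an invariant mean (extended
complex-linearly to complex-valued functions) gives a bounded Hermitian sesquilinear form that is
`π`-invariant, and coercive because `π` is uniformly bounded. Such a form is `⟪S v, S w⟫` for an
invertible `S`, obtained by factoring the positive invertible operator representing the form as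
`S⋆ S`; invariance of the form says precisely that each `S π(g) S⁻¹` is unitary.
-/

open scoped InnerProductSpace ComplexConjugate
open BoundedContinuousFunction

section PositiveFunctional

variable {X : Type*} [TopologicalSpace X]

theorem map_const_eq_mul (m : (X →ᵇ ℝ) →ₗ[ℝ] ℝ) (c : ℝ) :
    m (const X c) = c * m (const X 1) := by
  rw [← smul_eq_mul, ← map_smul]
  congr 1
  ext
  simp

variable {m : (X →ᵇ ℝ) →ₗ[ℝ] ℝ}

theorem abs_map_le_of_map_nonneg (hm : ∀ f, 0 ≤ f → 0 ≤ m f) (f : X →ᵇ ℝ) :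
    |m f| ≤ ‖f‖ * m (const X 1) := by
  have hmono := (PositiveLinearMap.mk₀ m hm).monotone'
  have hf (x : X) : |f x| ≤ ‖f‖ := f.norm_coe_le_norm x
  have hlower : m (const X (-‖f‖)) ≤ m f := hmono fun x => neg_le_of_abs_le (hf x)
  have hupper : m f ≤ m (const X ‖f‖) := hmono fun x => le_of_abs_le (hf x)
  rw [map_const_eq_mul] at hlower hupper
  exact abs_le.2 ⟨by linarith, hupper⟩

theorem continuous_of_map_nonneg (hm : ∀ f, 0 ≤ f → 0 ≤ m f) : Continuous m :=
  AddMonoidHomClass.continuous_of_bound m (m (const X 1)) fun f => by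
    simpa [mul_comm] using abs_map_le_of_map_nonneg hm f

theorem le_map_of_forall_le (hm : ∀ f, 0 ≤ f → 0 ≤ m f) (hm1 : m (const X 1) = 1) {c : ℝ}
    {f : X →ᵇ ℝ} (hf : ∀ x, c ≤ f x) : c ≤ m f := by
  have h : m (const X c) ≤ m f := (PositiveLinearMap.mk₀ m hm).monotone' hf
  rwa [map_const_eq_mul, hm1, mul_one] at h

end PositiveFunctional

section ComplexExtension

variable {X : Type*} [TopologicalSpace X] (μ : StrongDual ℝ (X →ᵇ ℝ))

noncomputable def complexExtension : StrongDual ℂ (X →ᵇ ℂ) :=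
  StrongDual.extendRCLike (μ.comp (Complex.reCLM.compLeftContinuousBounded X))

theorem re_complexExtension_apply (f : X →ᵇ ℂ) :
    (complexExtension μ f).re = μ (Complex.reCLM.compLeftContinuousBounded X f) :=
  StrongDual.re_extendRCLike_apply (𝕜 := ℂ) _ f

theorem complexExtension_star (f : X →ᵇ ℂ) :
    complexExtension μ (star f) = conj (complexExtension μ f) := by
  have hre : Complex.reCLM.compLeftContinuousBounded X (star f) =
      Complex.reCLM.compLeftContinuousBounded X f := by
    ext; simp
  have him : Complex.reCLM.compLeftContinuousBounded X (Complex.I • star f) =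
      -Complex.reCLM.compLeftContinuousBounded X (Complex.I • f) := by
    ext; simp
  apply RCLike.ext
  · simp [complexExtension, hre]
  · simp [complexExtension, him]

theorem complexExtension_compContinuous {φ : C(X, X)}
    (hμ : ∀ f : X →ᵇ ℝ, μ (f.compContinuous φ) = μ f) (f : X →ᵇ ℂ) :
    complexExtension μ (f.compContinuous φ) = complexExtension μ f := by
  have hre (f : X →ᵇ ℂ) : Complex.reCLM.compLeftContinuousBounded X (f.compContinuous φ) =
      (Complex.reCLM.compLeftContinuousBounded X f).compContinuous φ := by
    ext; simp
  have hsmul : Complex.I • f.compContinuous φ = (Complex.I • f).compContinuous φ := by ext; simp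
  simp [complexExtension, StrongDual.extendRCLike_apply, hsmul, hre, hμ]

end ComplexExtension

section OrbitInner

variable {G : Type*} [Group G] {H : Type*} [NormedAddCommGroup H] [InnerProductSpace ℂ H]
  {π : G →* (H ≃L[ℂ] H)} {C : ℝ}

theorem norm_map_le (hC : ∀ g, ‖(π g : H →L[ℂ] H)‖ ≤ C) (g : G) (v : H) : ‖π g v‖ ≤ C * ‖v‖ :=
  ((π g : H →L[ℂ] H).le_opNorm v).trans (mul_le_mul_of_nonneg_right (hC g) (norm_nonneg v))

theorem norm_le_mul_norm_map (hC : ∀ g, ‖(π g : H →L[ℂ] H)‖ ≤ C) (g : G) (v : H) :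
    ‖v‖ ≤ C * ‖π g v‖ := by
  calc ‖v‖ = ‖(π g⁻¹ * π g) v‖ := by rw [← map_mul, inv_mul_cancel, map_one]; rfl
    _ ≤ C * ‖π g v‖ := norm_map_le hC _ _

theorem norm_inner_map_map_le (hC : ∀ g, ‖(π g : H →L[ℂ] H)‖ ≤ C) (g : G) (v w : H) :
    ‖⟪π g v, π g w⟫_ℂ‖ ≤ C ^ 2 * ‖v‖ * ‖w‖ := by
  have hC0 : 0 ≤ C := (norm_nonneg _).trans (hC 1)
  calc ‖⟪π g v, π g w⟫_ℂ‖ ≤ ‖π g v‖ * ‖π g w‖ := norm_inner_le_norm _ _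
    _ ≤ C * ‖v‖ * (C * ‖w‖) :=
      mul_le_mul (norm_map_le hC _ _) (norm_map_le hC _ _) (norm_nonneg _) (by positivity)
    _ = C ^ 2 * ‖v‖ * ‖w‖ := by ring

variable [TopologicalSpace G] [ContinuousInv G]

-- The inverse makes `π h` act on these functions by left translation by `h⁻¹`, which a left
-- invariant mean does not see.
noncomputable def orbitInner (hπ : ∀ v, Continuous fun g => π g v)
    (hC : ∀ g, ‖(π g : H →L[ℂ] H)‖ ≤ C) : H →ₗ⋆[ℂ] H →ₗ[ℂ] G →ᵇ ℂ :=
  LinearMap.mk₂'ₛₗ _ _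
    (fun v w => .ofNormedAddCommGroup (fun g => ⟪π g⁻¹ v, π g⁻¹ w⟫_ℂ)
      (((hπ v).comp continuous_inv).inner ((hπ w).comp continuous_inv)) (C ^ 2 * ‖v‖ * ‖w‖)
      fun g => norm_inner_map_map_le hC g⁻¹ v w)
    (fun _ _ _ => by ext; simp)
    (fun _ _ _ => by ext; simp [mul_comm])
    (fun _ _ _ => by ext; simp)
    (fun _ _ _ => by ext; simp)

variable (hπ : ∀ v, Continuous fun g => π g v) (hC : ∀ g, ‖(π g : H →L[ℂ] H)‖ ≤ C)

theorem orbitInner_apply (v w : H) (g : G) : orbitInner hπ hC v w g = ⟪π g⁻¹ v, π g⁻¹ w⟫_ℂ := rfl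

theorem norm_orbitInner_le (v w : H) : ‖orbitInner hπ hC v w‖ ≤ C ^ 2 * ‖v‖ * ‖w‖ :=
  (norm_le (by positivity)).2 fun g => norm_inner_map_map_le hC g⁻¹ v w

theorem orbitInner_swap (v w : H) : orbitInner hπ hC w v = star (orbitInner hπ hC v w) := by
  ext g; simp [orbitInner_apply]

theorem orbitInner_map_map [ContinuousMul G] (h : G) (v w : H) :
    orbitInner hπ hC (π h v) (π h w) =
      (orbitInner hπ hC v w).compContinuous (Homeomorph.mulLeft h⁻¹ : C(G, G)) := by
  ext g
  simp only [orbitInner_apply, compContinuous_apply, ContinuousMap.coe_coe, Homeomorph.coe_mulLeft,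
    mul_inv_rev, inv_inv, map_mul]
  rfl

end OrbitInner

section AveragedInner

variable {G : Type*} [Group G] [TopologicalSpace G] [ContinuousInv G]
  {H : Type*} [NormedAddCommGroup H] [InnerProductSpace ℂ H]
  {π : G →* (H ≃L[ℂ] H)} {C : ℝ}
  (μ : StrongDual ℝ (G →ᵇ ℝ)) (hπ : ∀ v, Continuous fun g => π g v)
  (hC : ∀ g, ‖(π g : H →L[ℂ] H)‖ ≤ C)

noncomputable def averagedInner : H →L⋆[ℂ] H →L[ℂ] ℂ :=
  ((orbitInner hπ hC).compr₂ₛₗ (complexExtension μ).toLinearMap).mkContinuous₂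
    (‖complexExtension μ‖ * C ^ 2) fun v w =>
      calc ‖complexExtension μ (orbitInner hπ hC v w)‖
          ≤ ‖complexExtension μ‖ * ‖orbitInner hπ hC v w‖ := (complexExtension μ).le_opNorm _
        _ ≤ ‖complexExtension μ‖ * (C ^ 2 * ‖v‖ * ‖w‖) := by
          gcongr; exact norm_orbitInner_le hπ hC v w
        _ = ‖complexExtension μ‖ * C ^ 2 * ‖v‖ * ‖w‖ := by ring

theorem averagedInner_apply (v w : H) :
    averagedInner μ hπ hC v w = complexExtension μ (orbitInner hπ hC v w) := rfl

theorem conj_averagedInner (v w : H) :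
    conj (averagedInner μ hπ hC v w) = averagedInner μ hπ hC w v := by
  rw [averagedInner_apply, averagedInner_apply, orbitInner_swap hπ hC v w, complexExtension_star]

theorem averagedInner_map_map [ContinuousMul G]
    (hμ : ∀ (g : G) (f : G →ᵇ ℝ), μ (f.compContinuous (Homeomorph.mulLeft g : C(G, G))) = μ f)
    (g : G) (v w : H) :
    averagedInner μ hπ hC (π g v) (π g w) = averagedInner μ hπ hC v w := by
  rw [averagedInner_apply, orbitInner_map_map, complexExtension_compContinuous μ (hμ g⁻¹)]
  rfl

theorem inv_sq_mul_norm_sq_le_re_averagedInner (hμ : ∀ f, 0 ≤ f → 0 ≤ μ f)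
    (hμ1 : μ (const G 1) = 1) (v : H) :
    C⁻¹ ^ 2 * ‖v‖ ^ 2 ≤ (averagedInner μ hπ hC v v).re := by
  rw [averagedInner_apply, re_complexExtension_apply]
  refine le_map_of_forall_le (m := μ.toLinearMap) hμ hμ1 fun g => ?_
  have hC0 : 0 ≤ C := (norm_nonneg _).trans (hC 1)
  have h : C⁻¹ * ‖v‖ ≤ ‖π g⁻¹ v‖ :=
    calc C⁻¹ * ‖v‖ ≤ C⁻¹ * (C * ‖π g⁻¹ v‖) := by
          gcongr
          exact norm_le_mul_norm_map hC _ v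
      _ = C⁻¹ * C * ‖π g⁻¹ v‖ := by ring
      _ ≤ ‖π g⁻¹ v‖ := mul_le_of_le_one_left (norm_nonneg _) inv_mul_le_one
  rw [ContinuousLinearMap.compLeftContinuousBounded_apply, Complex.reCLM_apply, orbitInner_apply,
    ← mul_pow]
  exact (pow_le_pow_left₀ (by positivity) h 2).trans_eq (inner_self_eq_norm_sq (𝕜 := ℂ) _).symm

end AveragedInner

theorem exists_continuousLinearEquiv_inner_map_map_eq {H : Type*} [NormedAddCommGroup H]
    [InnerProductSpace ℂ H] [CompleteSpace H] (B : H →L⋆[ℂ] H →L[ℂ] ℂ)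
    (hB : ∀ v w, conj (B v w) = B w v) {c : ℝ} (hc : 0 < c)
    (hB_coercive : ∀ v, c * ‖v‖ ^ 2 ≤ (B v v).re) :
    ∃ S : H ≃L[ℂ] H, ∀ v w, ⟪S v, S w⟫_ℂ = B v w := by
  set T := InnerProductSpace.continuousLinearMapOfBilin B
  have hT : ∀ v w, ⟪T v, w⟫_ℂ = B v w := InnerProductSpace.continuousLinearMapOfBilin_apply B
  have hT_pos : T.IsPositive := by
    refine ⟨fun v w => ?_, fun v => ?_⟩
    · simp only [ContinuousLinearMap.coe_coe]
      rw [hT, ← inner_conj_symm, hT, hB]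
    · rw [T.reApplyInnerSelf_apply, hT]
      exact le_trans (by positivity) (hB_coercive v)
  have hT_unit : IsUnit T :=
    T.isUnit_of_forall_le_norm_inner_map (c := ⟨c, hc.le⟩) hc fun v => by
      rw [hT, mul_comm]
      exact (hB_coercive v).trans (Complex.re_le_norm _)
  obtain ⟨S, hS, hTS⟩ := CStarAlgebra.isStrictlyPositive_iff_eq_star_mul_self.mp
    (hT_unit.isStrictlyPositive (T.nonneg_iff_isPositive.mpr hT_pos))
  refine ⟨.unitsEquiv ℂ H hS.unit, fun v w => ?_⟩
  simp only [ContinuousLinearEquiv.unitsEquiv_apply, IsUnit.unit_spec]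
  rw [← ContinuousLinearMap.adjoint_inner_left, ← ContinuousLinearMap.star_eq_adjoint, ← hT, hTS]
  rfl

/-- The Sz.-Nagy–Day–Dixmier theorem: every amenable topological group is unitarisable. -/
theorem unitarisable_of_amenable (G : Type*) [Group G] [TopologicalSpace G]
    [IsTopologicalGroup G] (hG : IsAmenableGroup G) : Unitarisable G := by
  obtain ⟨m, hm1, hm, hm_inv⟩ := hG
  intro H _ _ _ π ⟨C, hC⟩ hπ
  -- `C = 0` is possible (when `H = 0`), but the coercivity constant `C⁻¹ ^ 2` must be positive.
  have hC' (g : G) : ‖(π g : H →L[ℂ] H)‖ ≤ max C 1 := (hC g).trans (le_max_left _ _)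
  let μ : StrongDual ℝ (G →ᵇ ℝ) := ⟨m, continuous_of_map_nonneg hm⟩
  obtain ⟨S, hS⟩ := exists_continuousLinearEquiv_inner_map_map_eq (averagedInner μ hπ hC')
    (conj_averagedInner μ hπ hC') (by positivity : 0 < (max C 1)⁻¹ ^ 2)
    (inv_sq_mul_norm_sq_le_re_averagedInner μ hπ hC' hm hm1)
  refine ⟨S, fun g v w => ?_⟩
  rw [hS, averagedInner_map_map μ hπ hC' hm_inv, ← hS, S.apply_symm_apply, S.apply_symm_apply]
end

section
/- Let K/k be an algebraic field extension. Then the automorphism group Aut(K/k), equipped with the topology of pointwise convergence, is a profinite group (compact, Hausdorff, totally disconnected). -/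
/-!
For an algebraic extension `K/k`, the Krull topology on `K ≃ₐ[k] K` is the topology of pointwise
convergence, i.e. the one induced from `K → K` with `K` discrete: a basic neighbourhood
`σ • Gal(K/E)` of `σ`, for `E = k(S)` with `S` finite, is the set of `τ` agreeing with `σ` on `S`.
Every `k`-endomorphism of `K` is bijective and sends `x` to a root of the minimal polynomial of `x`,
so the image of `K ≃ₐ[k] K` in `K → K` is the set of `k`-algebra maps, a closed subset of the
compact product `∏ₓ rootSet (minpoly k x)`. Hausdorffness and total disconnectedness of the Krull
topology hold for every algebraic extension.
-/
open Set Filter Topology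
open scoped Pointwise

section PointwiseLimits

variable (R A B : Type*) [CommSemiring R] [Semiring A] [Semiring B] [Algebra R A] [Algebra R B]
  [TopologicalSpace B] [T2Space B]

theorem isClosed_setOfPred_commutes :
    IsClosed {f : A → B | ∀ r : R, f (algebraMap R A r) = algebraMap R B r} := by
  simp only [ofPred_forall]
  exact isClosed_iInter fun r => isClosed_eq (continuous_apply _) continuous_const

theorem AlgHom.isClosed_range_coe [IsTopologicalSemiring B] :
    IsClosed (range ((↑) : (A →ₐ[R] B) → A → B)) :=
  isClosed_of_closure_subset fun f hf =>
    ⟨{ monoidHomOfMemClosureRangeCoe f hf, addMonoidHomOfMemClosureRangeCoe f hf with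
        commutes' := (isClosed_setOfPred_commutes R A B).closure_subset_iff.2
          (range_subset_iff.2 AlgHom.commutes) hf }, rfl⟩

end PointwiseLimits

section Krull

variable {k K : Type*} [Field k] [Field K] [Algebra k K]

theorem AlgHom.apply_mem_rootSet_minpoly [Algebra.IsIntegral k K] (f : K →ₐ[k] K) (x : K) :
    f x ∈ (minpoly k x).rootSet K := by
  refine Polynomial.mem_rootSet.mpr ⟨minpoly.ne_zero (Algebra.IsIntegral.isIntegral x), ?_⟩
  rw [Polynomial.aeval_algHom_apply, minpoly.aeval, map_zero]

theorem AlgEquiv.range_coe_eq_range_algHom_coe [Algebra.IsAlgebraic k K] :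
    range ((↑) : (K ≃ₐ[k] K) → K → K) = range ((↑) : (K →ₐ[k] K) → K → K) := by
  refine Subset.antisymm (range_subset_iff.2 fun σ => ⟨σ, rfl⟩) (range_subset_iff.2 fun f => ?_)
  obtain ⟨σ, rfl⟩ := (Algebra.IsAlgebraic.algEquivEquivAlgHom k K).surjective f
  exact ⟨σ, rfl⟩

theorem AlgEquiv.isCompact_range_coe [TopologicalSpace K] [DiscreteTopology K]
    [Algebra.IsAlgebraic k K] : IsCompact (range ((↑) : (K ≃ₐ[k] K) → K → K)) := by
  rw [range_coe_eq_range_algHom_coe]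
  refine (isCompact_univ_pi fun x => ((minpoly k x).rootSet_finite K).isCompact).of_isClosed_subset
    (AlgHom.isClosed_range_coe k K K) ?_
  rintro _ ⟨f, rfl⟩ x -
  exact f.apply_mem_rootSet_minpoly x

theorem AlgEquiv.mem_smul_fixingSubgroup_adjoin_iff (σ τ : K ≃ₐ[k] K) (S : Set K) :
    τ ∈ σ • ((IntermediateField.adjoin k S).fixingSubgroup : Set (K ≃ₐ[k] K)) ↔
      ∀ x ∈ S, τ x = σ x := by
  rw [mem_leftCoset_iff, SetLike.mem_coe, IntermediateField.mem_fixingSubgroup_iff]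
  simp only [← AlgEquiv.smul_def, IntermediateField.forall_mem_adjoin_smul_eq_self_iff]
  simp [AlgEquiv.smul_def, AlgEquiv.symm_apply_eq]

theorem krullTopology_nhds_hasBasis [Algebra.IsIntegral k K] (σ : K ≃ₐ[k] K) :
    (𝓝 σ).HasBasis Set.Finite fun S => {τ | ∀ x ∈ S, τ x = σ x} := by
  refine (GroupFilterBasis.nhds_hasBasis (galGroupBasis k K) σ).to_hasBasis ?_ ?_
  · rintro _ ⟨_, ⟨E, hE, rfl⟩, rfl⟩
    have : FiniteDimensional k E := hE
    obtain ⟨S, rfl⟩ : E.FG := IntermediateField.essFiniteType_iff.mp inferInstance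
    exact ⟨S, S.finite_toSet, fun τ hτ => (AlgEquiv.mem_smul_fixingSubgroup_adjoin_iff σ τ S).2 hτ⟩
  · intro S hS
    have : Finite S := hS
    have : FiniteDimensional k (IntermediateField.adjoin k S) :=
      IntermediateField.finiteDimensional_adjoin fun x _ => Algebra.IsIntegral.isIntegral x
    refine ⟨_, ⟨_, ⟨_, this, rfl⟩, rfl⟩, fun τ hτ => ?_⟩
    exact (AlgEquiv.mem_smul_fixingSubgroup_adjoin_iff σ τ S).1 hτ

theorem AlgEquiv.isInducing_coe [TopologicalSpace K] [DiscreteTopology K]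
    [Algebra.IsIntegral k K] : IsInducing ((↑) : (K ≃ₐ[k] K) → K → K) := by
  refine isInducing_iff_nhds.2 fun σ => (krullTopology_nhds_hasBasis σ).eq_of_same_basis ?_
  rw [nhds_pi]
  simp only [nhds_discrete]
  exact (hasBasis_pi_pure _).comap _

theorem krullTopology_compactSpace [Algebra.IsAlgebraic k K] : CompactSpace (K ≃ₐ[k] K) := by
  let _ : TopologicalSpace K := ⊥
  have : DiscreteTopology K := ⟨rfl⟩
  rw [← isCompact_univ_iff, AlgEquiv.isInducing_coe.isCompact_iff, image_univ]
  exact AlgEquiv.isCompact_range_coe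

end Krull

/-- The automorphism group of an algebraic field extension `K/k`, with the topology of
pointwise convergence (the Krull topology), is a profinite group: compact, Hausdorff and
totally disconnected. -/
theorem galoisGroup_profinite_of_algebraic (k K : Type*) [Field k] [Field K] [Algebra k K]
    [Algebra.IsAlgebraic k K] :
    CompactSpace (K ≃ₐ[k] K) ∧ T2Space (K ≃ₐ[k] K) ∧ TotallyDisconnectedSpace (K ≃ₐ[k] K) :=
  ⟨krullTopology_compactSpace, krullTopology_t2, inferInstance⟩
end

section
/- Every profinite group is isomorphic (as a topological group) to the Galois group Aut(K/k) of some algebraic Galois field extension K/k. -/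
/-!
Let `G` act on `F = ℚ(X_t)`, with `t` running over the cosets of all open subgroups of `G`, by
permuting the variables. Every stabilizer is open, and the action is faithful because the open
subgroups of a profinite group intersect in `1`.

For any action of a compact group on a field `F` with open stabilizers, every orbit is finite, and
`x` is a root of the separable split polynomial `∏_{y ∈ G • x} (X - y)`, whose coefficients lie in
`k = F^G`; hence `F/k` is Galois. The map `G → Gal(F/k)` is continuous for the Krull topology, so
its image is a closed subgroup with fixed field `k`, which by the Galois correspondence for infinite
extensions is all of `Gal(F/k)`. A continuous bijection from a compact space to a Hausdorff one is
a homeomorphism.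
-/

universe u

open Polynomial MulAction

section OrbitPolynomial

variable {G F : Type*} [Group G] [Field F] [MulSemiringAction G F] {x : F}

noncomputable def orbitPoly (hx : (orbit G x).Finite) : F[X] :=
  ∏ y ∈ hx.toFinset, (X - C y)

variable (hx : (orbit G x).Finite)

theorem orbitPoly_monic : (orbitPoly hx).Monic :=
  monic_prod_of_monic _ _ fun y _ => monic_X_sub_C y

theorem orbitPoly_splits : (orbitPoly hx).Splits :=
  Splits.prod fun y _ => Splits.X_sub_C y

theorem orbitPoly_separable : (orbitPoly hx).Separable :=
  separable_prod_X_sub_C_iff'.2 fun _ _ _ _ h => h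

theorem eval_orbitPoly_eq_zero_iff {y : F} : (orbitPoly hx).eval y = 0 ↔ y ∈ orbit G x := by
  simp [orbitPoly, eval_prod, Finset.prod_eq_zero_iff, sub_eq_zero]

theorem smul_orbitPoly (g : G) : g • orbitPoly hx = orbitPoly hx := by
  rw [orbitPoly, Finset.smul_prod']
  exact Finset.prod_nbij' (g • ·) (g⁻¹ • ·) (by simpa using fun _ => mem_orbit_of_mem_orbit g)
    (by simpa using fun _ => mem_orbit_of_mem_orbit g⁻¹) (by simp) (by simp) (by simp [smul_sub])

theorem orbitPoly_mem_lifts : orbitPoly hx ∈ lifts (algebraMap (FixedPoints.subfield G F) F) :=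
  (lifts_iff_coeff_lifts _).2 fun n =>
    ⟨⟨(orbitPoly hx).coeff n, fun g => by rw [← coeff_smul, smul_orbitPoly]⟩, rfl⟩

end OrbitPolynomial

theorem isOpen_fixingSubgroup_of_finite {G α : Type*} [Group G] [TopologicalSpace G]
    [MulAction G α] {s : Set α} (hs : s.Finite) (h : ∀ a ∈ s, IsOpen (stabilizer G a : Set G)) :
    IsOpen (fixingSubgroup G s : Set G) := by
  have : (fixingSubgroup G s : Set G) = ⋂ a ∈ s, (stabilizer G a : Set G) := by
    ext g
    simp [mem_fixingSubgroup_iff]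
  rw [this]
  exact hs.isOpen_biInter h

theorem finite_orbit_of_isOpen_stabilizer {G α : Type*} [Group G] [TopologicalSpace G]
    [SeparatelyContinuousMul G] [CompactSpace G] [MulAction G α] {a : α}
    (h : IsOpen (stabilizer G a : Set G)) : (orbit G a).Finite :=
  have := Subgroup.quotient_finite_of_isOpen _ h
  Set.finite_coe_iff.1 (Finite.of_equiv _ (orbitEquivQuotientStabilizer G a).symm)

section OpenStabilizers

variable {G F : Type*} [Group G] [TopologicalSpace G] [IsTopologicalGroup G]
  [Field F] [MulSemiringAction G F] (hstab : ∀ x : F, IsOpen (stabilizer G x : Set G))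
include hstab

theorem continuous_toAlgAut_of_isOpen_stabilizer :
    Continuous (MulSemiringAction.toAlgAut G (FixedPoints.subfield G F) F) := by
  refine continuous_of_continuousAt_one _ ?_
  rw [ContinuousAt, map_one]
  intro s hs
  obtain ⟨E, _, hE⟩ := (krullTopology_mem_nhds_one_iff _ _ s).1 hs
  obtain ⟨t, rfl⟩ : E.FG :=
    E.fg_of_fg_toSubalgebra (Subalgebra.fg_of_fg_toSubmodule (Module.Finite.iff_fg.1 ‹_›))
  have ht := isOpen_fixingSubgroup_of_finite t.finite_toSet fun x _ => hstab x
  refine Filter.mem_map.2 (Filter.mem_of_superset (ht.mem_nhds (one_mem _)) fun g hg => hE ?_)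
  rw [SetLike.mem_coe, IntermediateField.mem_fixingSubgroup_iff]
  exact (IntermediateField.forall_mem_adjoin_smul_eq_self_iff _ (m := g)).2
    ((mem_fixingSubgroup_iff G).1 hg)

variable [CompactSpace G]

theorem minpoly_map_dvd_orbitPoly (x : F) :
    (minpoly (FixedPoints.subfield G F) x).map (algebraMap _ F) ∣
      orbitPoly (finite_orbit_of_isOpen_stabilizer (hstab x)) := by
  obtain ⟨q, hq⟩ :=
    (mem_lifts _).1 (orbitPoly_mem_lifts (finite_orbit_of_isOpen_stabilizer (hstab x)))
  rw [← hq]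
  refine Polynomial.map_dvd _ (minpoly.dvd _ x ?_)
  rw [aeval_def, eval₂_eq_eval_map, hq, eval_orbitPoly_eq_zero_iff]
  exact mem_orbit_self x

theorem isIntegral_of_isOpen_stabilizer (x : F) : IsIntegral (FixedPoints.subfield G F) x := by
  by_contra h
  have := minpoly_map_dvd_orbitPoly hstab x
  rw [minpoly.eq_zero h, Polynomial.map_zero, zero_dvd_iff] at this
  exact (orbitPoly_monic _).ne_zero this

theorem isGalois_of_isOpen_stabilizer : IsGalois (FixedPoints.subfield G F) F where
  to_isSeparable := ⟨fun x => (separable_map _).1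
    ((orbitPoly_separable _).of_dvd (minpoly_map_dvd_orbitPoly hstab x))⟩
  to_normal := normal_iff.2 fun x => ⟨isIntegral_of_isOpen_stabilizer hstab x,
    (orbitPoly_splits _).of_dvd (orbitPoly_monic _).ne_zero (minpoly_map_dvd_orbitPoly hstab x)⟩

theorem toAlgAut_surjective_of_isOpen_stabilizer :
    Function.Surjective (MulSemiringAction.toAlgAut G (FixedPoints.subfield G F) F) := by
  have hGal := isGalois_of_isOpen_stabilizer hstab
  have : T2Space Gal(F/FixedPoints.subfield G F) := krullTopology_t2
  let H : ClosedSubgroup Gal(F/FixedPoints.subfield G F) :=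
    ⟨(MulSemiringAction.toAlgAut G _ F).range,
      (isCompact_range (continuous_toAlgAut_of_isOpen_stabilizer hstab)).isClosed⟩
  have hH : IntermediateField.fixedField H.toSubgroup = ⊥ :=
    eq_bot_iff.2 fun x hx => IntermediateField.mem_bot.2 ⟨⟨x, fun g => hx ⟨_, g, rfl⟩⟩, rfl⟩
  have := InfiniteGalois.fixingSubgroup_fixedField H
  rw [hH, IntermediateField.fixingSubgroup_bot] at this
  exact MonoidHom.range_eq_top.1 this.symm

theorem toAlgAut_bijective_of_isOpen_stabilizer [FaithfulSMul G F] :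
    Function.Bijective (MulSemiringAction.toAlgAut G (FixedPoints.subfield G F) F) :=
  ⟨fun _ _ h => eq_of_smul_eq_smul fun x => DFunLike.congr_fun h x,
    toAlgAut_surjective_of_isOpen_stabilizer hstab⟩

end OpenStabilizers

namespace MvPolynomial

variable {R σ G : Type*} [CommSemiring R] [Group G] [MulAction G σ]

noncomputable abbrev renameAction : MulSemiringAction G (MvPolynomial σ R) where
  smul g := rename (g • ·)
  one_smul p := by
    change rename ((1 : G) • ·) p = p
    simp only [one_smul]
    exact rename_id_apply p
  mul_smul g h p := by
    change rename ((g * h) • ·) p = rename (g • ·) (rename (h • ·) p)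
    simp [rename_rename, Function.comp_def, mul_smul]
  smul_zero _ := map_zero _
  smul_add _ := map_add _
  smul_one _ := map_one _
  smul_mul _ := map_mul _

attribute [local instance] renameAction

theorem smul_eq_rename (g : G) (p : MvPolynomial σ R) : g • p = rename (g • ·) p := rfl

theorem isOpen_stabilizer [TopologicalSpace G] [SeparatelyContinuousMul G]
    (h : ∀ i : σ, IsOpen (stabilizer G i : Set G)) (p : MvPolynomial σ R) :
    IsOpen (stabilizer G p : Set G) := by
  obtain ⟨s, q, rfl⟩ := exists_finset_rename p
  refine Subgroup.isOpen_mono (fun g hg => ?_)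
    (isOpen_fixingSubgroup_of_finite s.finite_toSet fun i _ => h i)
  rw [mem_stabilizer_iff, smul_eq_rename, rename_rename]
  congr 2
  exact _root_.funext fun i : s => (mem_fixingSubgroup_iff G).1 hg i.1 i.2

theorem faithfulSMul_renameAction [Nontrivial R] [FaithfulSMul G σ] :
    FaithfulSMul G (MvPolynomial σ R) :=
  ⟨fun h => eq_of_smul_eq_smul fun i => by simpa [smul_eq_rename] using h (X i)⟩

end MvPolynomial

theorem IsFractionRing.isOpen_stabilizer {G B L : Type*} [Group G] [TopologicalSpace G]
    [SeparatelyContinuousMul G] [CommRing B] [Field L] [Algebra B L] [IsFractionRing B L]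
    [MulSemiringAction G B] [MulSemiringAction G L] [SMulDistribClass G B L]
    (h : ∀ b : B, IsOpen (stabilizer G b : Set G)) (x : L) : IsOpen (stabilizer G x : Set G) := by
  obtain ⟨a, b, -, rfl⟩ := IsFractionRing.div_surjective B x
  refine Subgroup.isOpen_mono (H₁ := stabilizer G a ⊓ stabilizer G b) (fun g hg => ?_)
    ((h a).inter (h b))
  rw [mem_stabilizer_iff, smul_div₀', ← algebraMap.coe_smul', ← algebraMap.coe_smul',
    hg.1, hg.2]

section OpenSubgroupCosets

variable {G : Type*} [Group G] [TopologicalSpace G] [IsTopologicalGroup G]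

theorem isOpen_stabilizer_sigma_quotient (t : Σ U : OpenSubgroup G, G ⧸ (U : Subgroup G)) :
    IsOpen (stabilizer G t : Set G) := by
  obtain ⟨U, q⟩ := t
  have : DiscreteTopology (G ⧸ (U : Subgroup G)) := QuotientGroup.discreteTopology U.isOpen
  convert stabilizer_isOpen G q using 2
  ext g
  simp [Sigma.smul_mk]

theorem faithfulSMul_sigma_quotient [CompactSpace G] [T2Space G] [TotallyDisconnectedSpace G] :
    FaithfulSMul G (Σ U : OpenSubgroup G, G ⧸ (U : Subgroup G)) := by
  refine ⟨fun {g₁ g₂} h => ?_⟩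
  by_contra hne
  obtain ⟨N, hN⟩ := ProfiniteGrp.exist_openNormalSubgroup_sub_open_nhds_of_one
    (isClosed_singleton (x := g₁⁻¹ * g₂)).isOpen_compl
    fun h1 => hne (inv_mul_eq_one.1 (Set.mem_singleton_iff.1 h1).symm)
  have := h ⟨N.toOpenSubgroup, (1 : G)⟩
  simp only [Sigma.smul_mk, Sigma.mk.inj_iff, heq_eq_eq, true_and, MulAction.Quotient.smul_mk,
    smul_eq_mul, mul_one, QuotientGroup.eq] at this
  exact hN this rfl

end OpenSubgroupCosets

attribute [local instance] MvPolynomial.renameAction in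
theorem exists_field_faithfulSMul_isOpen_stabilizer (G : Type u) [Group G] [TopologicalSpace G]
    [IsTopologicalGroup G] [CompactSpace G] [T2Space G] [TotallyDisconnectedSpace G] :
    ∃ (F : Type u) (_ : Field F) (_ : MulSemiringAction G F),
      FaithfulSMul G F ∧ ∀ x : F, IsOpen (stabilizer G x : Set G) := by
  let B := MvPolynomial (Σ U : OpenSubgroup G, G ⧸ (U : Subgroup G)) ℚ
  let := IsFractionRing.mulSemiringAction G B (FractionRing B)
  have := faithfulSMul_sigma_quotient (G := G)
  have : FaithfulSMul G B := MvPolynomial.faithfulSMul_renameAction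
  exact ⟨FractionRing B, inferInstance, inferInstance, IsFractionRing.faithfulSMul G B _,
    IsFractionRing.isOpen_stabilizer (B := B)
      (MvPolynomial.isOpen_stabilizer isOpen_stabilizer_sigma_quotient)⟩

/-- Waterhouse's theorem: every profinite group (compact Hausdorff totally disconnected
topological group) is isomorphic, as a topological group, to the Galois group of some
Galois (algebraic) field extension `K/k`. -/
theorem profinite_is_galoisGroup (G : Type u) [Group G] [TopologicalSpace G]
    [IsTopologicalGroup G] [CompactSpace G] [T2Space G] [TotallyDisconnectedSpace G] :
    ∃ (k K : Type u) (_ : Field k) (_ : Field K) (_ : Algebra k K),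
      IsGalois k K ∧ ∃ e : G ≃* (K ≃ₐ[k] K), Continuous e ∧ Continuous e.symm := by
  obtain ⟨F, _, _, _, hstab⟩ := exists_field_faithfulSMul_isOpen_stabilizer G
  have hGal := isGalois_of_isOpen_stabilizer hstab
  have : T2Space Gal(F/FixedPoints.subfield G F) := krullTopology_t2
  let e := MulEquiv.ofBijective _ (toAlgAut_bijective_of_isOpen_stabilizer hstab)
  have he : Continuous e := continuous_toAlgAut_of_isOpen_stabilizer hstab
  exact ⟨_, F, _, _, _, hGal, e, he, he.continuous_symm_of_equiv_compact_to_t2⟩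
end

section
/- Let G be a totally disconnected locally compact group and α a contracting automorphism of G (αⁿ(g) → 1 for all g). Then G is a union of an increasing sequence of compact open subgroups conjugated into each other by α; in particular G is locally elliptic (every finite subset is contained in a compact subgroup). -/
/-!
Van Dantzig: the stabilizer of a compact open neighbourhood of `1` under left translation is a
compact open subgroup `H`. Since `α` contracts, the closed subgroups
`Eₙ = {g | αᵐ g ∈ H for all m ≥ n}` cover `G`, so by Baire one of them, `O`, is open; it is
compact and `α O ≤ O`. Then the subgroups `α⁻ᵏ O` increase, are compact open, and cover `G`,
again because `α` contracts.
-/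

open Filter Topology Set
open scoped Pointwise

section VanDantzig

theorem exists_isCompact_isOpen_mem {X : Type*} [TopologicalSpace X] [LocallyCompactSpace X]
    [T2Space X] [TotallyDisconnectedSpace X] (x : X) :
    ∃ W : Set X, IsCompact W ∧ IsOpen W ∧ x ∈ W := by
  obtain ⟨K, hK, hxK⟩ := exists_compact_mem_nhds x
  obtain ⟨W, hW, hxW, hWK⟩ := loc_compact_Haus_tot_disc_of_zero_dim.mem_nhds_iff.1 hxK
  exact ⟨W, hK.of_isClosed_subset hW.isClosed hWK, hW.isOpen, hxW⟩

variable {G : Type*} [Group G]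

theorem stabilizer_subset_of_one_mem {W : Set G} (h1 : (1 : G) ∈ W) :
    (MulAction.stabilizer G W : Set G) ⊆ W := fun g hg => by
  simpa [MulAction.mem_stabilizer_iff.1 hg] using smul_mem_smul_set (a := g) h1

variable [TopologicalSpace G] [IsTopologicalGroup G]

theorem stabilizer_mem_nhds_one {W : Set G} (hWc : IsCompact W) (hWo : IsOpen W) :
    (MulAction.stabilizer G W : Set G) ∈ 𝓝 1 := by
  obtain ⟨V, hV, hVW⟩ := compact_open_separated_mul_left hWc hWo subset_rfl
  have smul_subset : ∀ g ∈ V, g • W ⊆ W := fun g hg => (smul_set_subset_mul hg).trans hVW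
  filter_upwards [hV, inv_mem_nhds_one G hV] with g hg hg'
  exact (smul_subset g hg).antisymm (subset_smul_set_iff.2 (smul_subset _ hg'))

theorem exists_isCompact_isOpen_subgroup [LocallyCompactSpace G] [TotallyDisconnectedSpace G] :
    ∃ H : Subgroup G, IsCompact (H : Set G) ∧ IsOpen (H : Set G) := by
  obtain ⟨W, hWc, hWo, h1⟩ := exists_isCompact_isOpen_mem (1 : G)
  have hopen := Subgroup.isOpen_of_mem_nhds _ (stabilizer_mem_nhds_one hWc hWo)
  exact ⟨_, hWc.of_isClosed_subset (Subgroup.isClosed_of_isOpen _ hopen)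
    (stabilizer_subset_of_one_mem h1), hopen⟩

end VanDantzig

namespace MulAut

variable {G : Type*} [Group G]

theorem coe_pow_eq_iterate (α : MulAut G) (n : ℕ) : ⇑(α ^ n) = (⇑α)^[n] := by
  induction n with
  | zero => rfl
  | succ n ih => rw [pow_succ, coe_mul, ih, Function.iterate_succ]

theorem pow_succ_apply (α : MulAut G) (n : ℕ) (g : G) : (α ^ (n + 1)) g = (α ^ n) (α g) := by
  rw [pow_succ, mul_apply]

def tailComap (α : MulAut G) (H : Subgroup G) (n : ℕ) : Subgroup G :=
  ⨅ m ≥ n, H.comap (α ^ m).toMonoidHom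

variable {α : MulAut G} {H : Subgroup G}

theorem mem_tailComap {n : ℕ} {g : G} : g ∈ α.tailComap H n ↔ ∀ m ≥ n, (α ^ m) g ∈ H := by
  simp [tailComap, Subgroup.mem_iInf]

theorem tailComap_le_comap_pow (n : ℕ) : α.tailComap H n ≤ H.comap (α ^ n).toMonoidHom :=
  fun _ hg => mem_tailComap.1 hg n le_rfl

theorem tailComap_le_comap_self (n : ℕ) :
    α.tailComap H n ≤ (α.tailComap H n).comap α.toMonoidHom := fun g hg =>
  mem_tailComap.2 fun m hm => by
    simpa [pow_succ_apply] using mem_tailComap.1 hg (m + 1) (by omega)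

theorem comap_pow_le_comap_pow_succ {O : Subgroup G} (hO : O ≤ O.comap α.toMonoidHom) (k : ℕ) :
    O.comap (α ^ k).toMonoidHom ≤ O.comap (α ^ (k + 1)).toMonoidHom := fun g hg => by
  simpa [pow_succ'] using hO hg

theorem monotone_comap_pow {O : Subgroup G} (hO : O ≤ O.comap α.toMonoidHom) :
    Monotone fun k => O.comap (α ^ k).toMonoidHom :=
  monotone_nat_of_le_succ (comap_pow_le_comap_pow_succ hO)

theorem le_comap_pow {O : Subgroup G} (hO : O ≤ O.comap α.toMonoidHom) (k : ℕ) :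
    O ≤ O.comap (α ^ k).toMonoidHom :=
  fun _ hg => monotone_comap_pow hO (Nat.zero_le k) hg

theorem map_comap_pow_succ (O : Subgroup G) (k : ℕ) :
    (O.comap (α ^ (k + 1)).toMonoidHom).map α.toMonoidHom = O.comap (α ^ k).toMonoidHom := by
  ext g
  simp only [Subgroup.mem_map, Subgroup.mem_comap, MulEquiv.coe_toMonoidHom, pow_succ_apply]
  exact ⟨fun ⟨x, hx, hxg⟩ => hxg ▸ hx, fun hg => ⟨α⁻¹ g, by simpa using hg, by simp⟩⟩

variable [TopologicalSpace G]

def IsContracting (α : MulAut G) : Prop :=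
  ∀ g : G, Tendsto (fun n => (α ^ n) g) atTop (𝓝 1)

theorem IsContracting.exists_forall_ge_mem (hα : α.IsContracting) {U : Set G} (hU : U ∈ 𝓝 1)
    (g : G) : ∃ n, ∀ m ≥ n, (α ^ m) g ∈ U :=
  eventually_atTop.1 (hα g hU)

theorem continuous_symm_pow (hα : Continuous α.symm) (n : ℕ) : Continuous (α ^ n).symm := by
  rw [← coe_inv, ← inv_pow, coe_pow_eq_iterate, coe_inv]
  exact hα.iterate n

theorem isCompact_comap_pow (hα : Continuous α.symm) (hH : IsCompact (H : Set G)) (n : ℕ) :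
    IsCompact (H.comap (α ^ n).toMonoidHom : Set G) := by
  rw [Subgroup.coe_comap, MulEquiv.coe_toMonoidHom, ← MulEquiv.coe_toEquiv,
    ← Equiv.image_symm_eq_preimage]
  exact hH.image (continuous_symm_pow hα n)

theorem isClosed_tailComap [T2Space G] (hα : Continuous α.symm) (hH : IsCompact (H : Set G))
    (n : ℕ) : IsClosed (α.tailComap H n : Set G) := by
  simp only [tailComap, Subgroup.coe_iInf]
  exact isClosed_biInter fun m _ => (isCompact_comap_pow hα hH m).isClosed

theorem iUnion_tailComap (hα : α.IsContracting) (hH : IsOpen (H : Set G)) :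
    ⋃ n, (α.tailComap H n : Set G) = univ :=
  eq_univ_of_forall fun g => mem_iUnion.2 <| (hα.exists_forall_ge_mem
    (hH.mem_nhds H.one_mem) g).imp fun _ => mem_tailComap.2

theorem iUnion_comap_pow (hα : α.IsContracting) {O : Subgroup G} (hO : IsOpen (O : Set G)) :
    ⋃ k, (O.comap (α ^ k).toMonoidHom : Set G) = univ :=
  eq_univ_of_forall fun g => mem_iUnion.2 <| (hα.exists_forall_ge_mem
    (hO.mem_nhds O.one_mem) g).imp fun k hk => hk k le_rfl

theorem exists_isCompact_isOpen_subgroup_le_comap [IsTopologicalGroup G] [LocallyCompactSpace G]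
    [T2Space G] (hα : α.IsContracting) (hα' : Continuous α.symm) (hHc : IsCompact (H : Set G))
    (hHo : IsOpen (H : Set G)) :
    ∃ O : Subgroup G, IsCompact (O : Set G) ∧ IsOpen (O : Set G) ∧ O ≤ O.comap α.toMonoidHom := by
  obtain ⟨N, x, hx⟩ := nonempty_interior_of_iUnion_of_closed (isClosed_tailComap hα' hHc)
    (iUnion_tailComap hα hHo)
  refine ⟨α.tailComap H N, ?_, ?_, tailComap_le_comap_self N⟩
  · exact (isCompact_comap_pow hα' hHc N).of_isClosed_subset (isClosed_tailComap hα' hHc N)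
      (tailComap_le_comap_pow N)
  · exact Subgroup.isOpen_of_mem_nhds _ (mem_interior_iff_mem_nhds.1 hx)

end MulAut

theorem union_compact_open_of_contracting_general (G : Type*) [Group G] [TopologicalSpace G]
    [IsTopologicalGroup G] [LocallyCompactSpace G] [TotallyDisconnectedSpace G]
    (α : G ≃* G) (hcont' : Continuous α.symm)
    (hcontracting : ∀ g : G, Tendsto (fun n => (⇑α)^[n] g) atTop (nhds (1 : G))) :
    (∃ U : ℕ → Subgroup G,
      (∀ n, IsCompact (U n : Set G)) ∧ (∀ n, IsOpen (U n : Set G)) ∧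
      (∀ n, U n ≤ U (n + 1)) ∧ (⋃ n, (U n : Set G)) = Set.univ ∧
      (∀ n, Subgroup.map α.toMonoidHom (U (n + 1)) = U n)) ∧
    ∀ s : Set G, s.Finite → ∃ K : Subgroup G, IsCompact (K : Set G) ∧ s ⊆ K := by
  have hα : MulAut.IsContracting α := fun g => by
    simpa only [MulAut.coe_pow_eq_iterate] using hcontracting g
  obtain ⟨H, hHc, hHo⟩ := exists_isCompact_isOpen_subgroup (G := G)
  obtain ⟨O, hOc, hOo, hO⟩ := MulAut.exists_isCompact_isOpen_subgroup_le_comap hα hcont' hHc hHo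
  set U : ℕ → Subgroup G := fun k => O.comap (α ^ k).toMonoidHom
  have hUc : ∀ k, IsCompact (U k : Set G) := MulAut.isCompact_comap_pow hcont' hOc
  have hcover : ⋃ k, (U k : Set G) = univ := MulAut.iUnion_comap_pow hα hOo
  refine ⟨⟨U, hUc, fun k => Subgroup.isOpen_mono (MulAut.le_comap_pow hO k) hOo,
    MulAut.comap_pow_le_comap_pow_succ hO, hcover, MulAut.map_comap_pow_succ O⟩, fun s hs => ?_⟩
  have hU : Monotone fun k => (U k : Set G) :=
    SetLike.coe_mono.comp (MulAut.monotone_comap_pow hO)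
  obtain ⟨n, hn⟩ := hU.directed_le.exists_mem_subset_of_finset_subset_biUnion (s := hs.toFinset)
    (by rw [hs.coe_toFinset, hcover]; exact subset_univ s)
  exact ⟨U n, hUc n, hs.coe_toFinset ▸ hn⟩

/-- A totally disconnected locally compact group admitting a contracting automorphism is
an increasing union of compact open subgroups mapped into each other by the automorphism;
in particular it is locally elliptic: every finite subset is contained in a compact
subgroup. -/
theorem union_compact_open_of_contracting (G : Type*) [Group G] [TopologicalSpace G]
    [IsTopologicalGroup G] [LocallyCompactSpace G] [TotallyDisconnectedSpace G]
    (α : G ≃* G) (hcont : Continuous α) (hcont' : Continuous α.symm)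
    (hcontracting : ∀ g : G, Tendsto (fun n => (⇑α)^[n] g) atTop (nhds (1 : G))) :
    (∃ U : ℕ → Subgroup G,
      (∀ n, IsCompact (U n : Set G)) ∧ (∀ n, IsOpen (U n : Set G)) ∧
      (∀ n, U n ≤ U (n + 1)) ∧ (⋃ n, (U n : Set G)) = Set.univ ∧
      (∀ n, Subgroup.map α.toMonoidHom (U (n + 1)) = U n)) ∧
    ∀ s : Set G, s.Finite → ∃ K : Subgroup G, IsCompact (K : Set G) ∧ s ⊆ K :=
  union_compact_open_of_contracting_general G α hcont' hcontracting
end
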